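/- arXiv:2108.06477 — 2 statements merged into one kernel-verified Lean document; each statement's English description precedes it below -/
import Mathlib

section
/- If r ≡ 0 (mod 4) and n = 3r+1, or r ≡ 1 (mod 4) and n = 3r+2, or r ≡ 2 (mod 4) and n = 3r, then every r-edge-colouring of the complete graph K_n has a colour class with strictly more than ex(n, P_5) edges, and hence contains a monochromatic copy of P_5. -/
/-- `G` contains the path on `t` vertices as a subgraph. -/
def ContainsPath (t : ℕ) {V : Type*} (G : SimpleGraph V) : Prop :=
  ∃ f : Fin t → V, Function.Injective f ∧
    ∀ i j : Fin t, (i : ℕ) + 1 = (j : ℕ) → G.Adj (f i) (f j)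

/-- The graph on `Fin n` formed by the edges of colour `c`. -/
def colorClass {n r : ℕ} (C : Sym2 (Fin n) → Fin r) (c : Fin r) : SimpleGraph (Fin n) :=
  SimpleGraph.fromEdgeSet {e | C e = c}

/-- The colouring `C` contains a monochromatic path on `t` vertices. -/
def HasMonoPath (t : ℕ) {n r : ℕ} (C : Sym2 (Fin n) → Fin r) : Prop :=
  ∃ c : Fin r, ContainsPath t (colorClass C c)

/-- The `r`-coloured Ramsey number of the path on `t` vertices. -/
noncomputable def pathRamsey (r t : ℕ) : ℕ :=
  sInf {n | ∀ C : Sym2 (Fin n) → Fin r, HasMonoPath t C}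

/-- The Turán number of the path on `t` vertices. -/
noncomputable def exPath (t n : ℕ) : ℕ :=
  sSup {m | ∃ G : SimpleGraph (Fin n), ¬ ContainsPath t G ∧ G.edgeSet.ncard = m}

/-!
A `P₅`-free graph on `n` vertices has at most `turanPathFive n = 6 ⌊n/4⌋ + (n mod 4).choose 2`
edges. Split it into connected components. A component on `k ≤ 4` vertices has at most
`k.choose 2` edges. A connected `P₅`-free graph on `k ≥ 5` vertices has a leaf: if every degree
were at least 2 there would be a path on four vertices, and extending it from its ends gives
either a `P₅` or a 4-cycle, which any edge leaving it turns into a `P₅`. Deleting the leaf keeps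
the graph connected, so induction gives at most `k + 1` edges; at `k = 5` the one exception, `K₄`
with a pendant edge, contains a `P₅`. Since `k + 1 ≤ turanPathFive k` for `k ≥ 5` and
`turanPathFive` is superadditive, the bound follows.

In each of the three cases `r · turanPathFive n < n.choose 2`, so by pigeonhole some colour class
of `K_n` has more than `turanPathFive n ≥ ex(n, P₅)` edges, and therefore contains a `P₅`.
-/

open Finset SimpleGraph

/-- The number of edges of `⌊n/4⌋` disjoint copies of `K₄` together with a `K_(n mod 4)`. -/
def turanPathFive (n : ℕ) : ℕ := 6 * (n / 4) + (n % 4).choose 2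

theorem turanPathFive_eq_ite (n : ℕ) :
    turanPathFive n = 6 * (n / 4) + if n % 4 = 2 then 1 else if n % 4 = 3 then 3 else 0 := by
  have := Nat.mod_lt n (by norm_num : 4 > 0)
  unfold turanPathFive
  interval_cases n % 4 <;> rfl

theorem turanPathFive_add_le (a b : ℕ) :
    turanPathFive a + turanPathFive b ≤ turanPathFive (a + b) := by
  simp only [turanPathFive_eq_ite]
  split_ifs <;> omega

theorem choose_two_le_turanPathFive {n : ℕ} (hn : n ≤ 4) : n.choose 2 ≤ turanPathFive n := by
  interval_cases n <;> decide

theorem add_one_le_turanPathFive {n : ℕ} (hn : 5 ≤ n) : n + 1 ≤ turanPathFive n := by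
  rw [turanPathFive_eq_ite]
  split_ifs <;> omega

theorem mul_turanPathFive_lt_choose_two {r n : ℕ} (hr : 1 ≤ r)
    (h : (r % 4 = 0 ∧ n = 3 * r + 1) ∨ (r % 4 = 1 ∧ n = 3 * r + 2) ∨
      (r % 4 = 2 ∧ n = 3 * r)) :
    r * turanPathFive n < n.choose 2 := by
  rw [Nat.choose_two_right, Nat.lt_iff_add_one_le, Nat.le_div_iff_mul_le two_pos, turanPathFive]
  obtain ⟨m, hm⟩ : ∃ m, r = 4 * m + r % 4 := ⟨r / 4, by omega⟩
  rcases h with ⟨hr4, rfl⟩ | ⟨hr4, rfl⟩ | ⟨hr4, rfl⟩ <;> rw [hr4] at hm <;> subst hm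
  · rw [show (3 * (4 * m + 0) + 1) / 4 = 3 * m by omega,
      show (3 * (4 * m + 0) + 1) % 4 = 1 by omega,
      show 3 * (4 * m + 0) + 1 - 1 = 12 * m by omega]
    norm_num [Nat.choose]
    nlinarith
  · rw [show (3 * (4 * m + 1) + 2) / 4 = 3 * m + 1 by omega,
      show (3 * (4 * m + 1) + 2) % 4 = 1 by omega,
      show 3 * (4 * m + 1) + 2 - 1 = 12 * m + 4 by omega]
    norm_num [Nat.choose]
    nlinarith
  · rw [show 3 * (4 * m + 2) / 4 = 3 * m + 1 by omega,
      show 3 * (4 * m + 2) % 4 = 2 by omega,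
      show 3 * (4 * m + 2) - 1 = 12 * m + 5 by omega]
    norm_num [Nat.choose]
    nlinarith

variable {V W : Type*} {G : SimpleGraph V} {H : SimpleGraph W}

theorem ContainsPath.map {t : ℕ} (φ : G ↪g H) : ContainsPath t G → ContainsPath t H := by
  rintro ⟨f, hf, hadj⟩
  exact ⟨φ ∘ f, φ.injective.comp hf, fun i j hij => φ.map_adj_iff.mpr (hadj i j hij)⟩

theorem containsPath_five_of_adj {a b c d e : V}
    (hab : G.Adj a b) (hbc : G.Adj b c) (hcd : G.Adj c d) (hde : G.Adj d e)
    (hac : a ≠ c) (had : a ≠ d) (hae : a ≠ e) (hbd : b ≠ d) (hbe : b ≠ e)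
    (hce : c ≠ e) :
    ContainsPath 5 G := by
  have := hab.ne; have := hbc.ne; have := hcd.ne; have := hde.ne
  refine ⟨![a, b, c, d, e], fun i j hij => ?_, fun i j hij => ?_⟩ <;>
    fin_cases i <;> fin_cases j <;> simp_all

theorem SimpleGraph.ncard_edgeSet [Fintype G.edgeSet] : G.edgeSet.ncard = #G.edgeFinset := by
  rw [← coe_edgeFinset, Set.ncard_coe_finset]

theorem SimpleGraph.eq_top_of_card_choose_two_le [Fintype V] [DecidableRel G.Adj]
    (h : (Fintype.card V).choose 2 ≤ #G.edgeFinset) : G = ⊤ := by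
  classical
  by_contra hne
  have := card_lt_card (edgeFinset_ssubset_edgeFinset.mpr (lt_top_iff_ne_top.mpr hne))
  rw [card_edgeFinset_top_eq_card_choose_two] at this
  omega

theorem SimpleGraph.card_edgeFinset_le_induce_add_induce_compl [Fintype V] [DecidableRel G.Adj]
    (s : Set V) [DecidablePred (· ∈ s)] (hs : ∀ a b, G.Adj a b → a ∈ s → b ∈ s) :
    #G.edgeFinset ≤ #(G.induce s).edgeFinset + #(G.induce sᶜ).edgeFinset := by
  classical
  have card_induce (t : Set V) [DecidablePred (· ∈ t)] :
      #(G.induce t).edgeFinset = #(G.edgeFinset ∩ t.toFinset.sym2) := by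
    rw [← map_edgeFinset_induce, card_map]
  rw [card_induce, card_induce]
  refine (card_le_card fun e he => ?_).trans (card_union_le _ _)
  induction e with
  | _ a b =>
  have hab : G.Adj a b := by simpa using he
  by_cases ha : a ∈ s
  · simp [hab, ha, hs a b hab ha]
  · have hb : b ∉ s := fun hb => ha (hs b a hab.symm hb)
    simp [hab, ha, hb]

theorem containsPath_five_of_induce_compl_singleton_eq_top [Fintype V]
    (h5 : 5 ≤ Fintype.card V) {u v : V} (hvu : G.Adj v u) (htop : G.induce {v}ᶜ = ⊤) :
    ContainsPath 5 G := by
  classical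
  have hadj {x y : V} (hx : x ≠ v) (hy : y ≠ v) (hxy : x ≠ y) : G.Adj x y := by
    have : (G.induce {v}ᶜ).Adj ⟨x, hx⟩ ⟨y, hy⟩ := by
      rw [htop, top_adj]
      exact fun h => hxy (congrArg Subtype.val h)
    simpa using this
  have hthree : 2 < #(univ \ {u, v}) := by
    rw [card_sdiff_of_subset (subset_univ _), card_univ]
    have := card_le_two (a := u) (b := v)
    omega
  obtain ⟨a, ha, b, hb, c, hc, hab, hac, hbc⟩ := two_lt_card.mp hthree
  simp only [mem_sdiff, mem_univ, mem_insert, mem_singleton, not_or, true_and] at ha hb hc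
  exact containsPath_five_of_adj hvu (hadj hvu.ne' ha.2 (Ne.symm ha.1)) (hadj ha.2 hb.2 hab)
    (hadj hb.2 hc.2 hbc) (Ne.symm ha.2) (Ne.symm hb.2) (Ne.symm hc.2) (Ne.symm hb.1)
    (Ne.symm hc.1) hac

namespace SimpleGraph.Connected

variable [Fintype V]

theorem exists_adj_mem_notMem (hG : G.Connected) {s : Finset V} (hs : s.Nonempty)
    (hcard : #s < Fintype.card V) : ∃ a ∈ s, ∃ b ∉ s, G.Adj a b := by
  obtain ⟨x, hx⟩ := hs
  obtain ⟨y, -, hy⟩ :=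
    exists_mem_notMem_of_card_lt_card (s := s) (t := univ) (by simpa using hcard)
  obtain ⟨d, -, hd, hd'⟩ := (hG x y).some.exists_boundary_dart s hx hy
  exact ⟨d.fst, hd, d.snd, hd', d.adj⟩

theorem containsPath_five_of_cycle_four (hG : G.Connected) (h5 : 5 ≤ Fintype.card V)
    {a b c d : V} (hab : G.Adj a b) (hbc : G.Adj b c) (hcd : G.Adj c d) (hda : G.Adj d a)
    (hac : a ≠ c) (hbd : b ≠ d) : ContainsPath 5 G := by
  classical
  obtain ⟨x, hx, y, hy, hxy⟩ := hG.exists_adj_mem_notMem (s := {a, b, c, d}) (by simp)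
    (card_le_four.trans_lt h5)
  simp only [mem_insert, mem_singleton, not_or] at hx hy
  obtain ⟨hya, hyb, hyc, hyd⟩ := hy
  rcases hx with rfl | rfl | rfl | rfl
  · exact containsPath_five_of_adj hxy.symm hab hbc hcd hyb hyc hyd hac hda.ne' hbd
  · exact containsPath_five_of_adj hxy.symm hbc hcd hda hyc hyd hya hbd hab.ne' hac.symm
  · exact containsPath_five_of_adj hxy.symm hcd hda hab hyd hya hyb hac.symm hbc.ne' hbd.symm
  · exact containsPath_five_of_adj hxy.symm hda hab hbc hya hyb hyc hbd.symm hcd.ne' hac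

theorem exists_path_four [DecidableRel G.Adj] (hG : G.Connected) (h4 : 4 ≤ Fintype.card V)
    (hdeg : ∀ v, 2 ≤ G.degree v) :
    ∃ a b c d, G.Adj a b ∧ G.Adj b c ∧ G.Adj c d ∧ a ≠ c ∧ a ≠ d ∧ b ≠ d := by
  classical
  obtain ⟨v⟩ : Nonempty V := Fintype.card_pos_iff.mp (by omega)
  obtain ⟨a, ha, b, hb, hab⟩ := one_lt_card.mp (hdeg v)
  obtain ⟨x, hx, hxv⟩ := exists_mem_ne (hdeg a) v
  rw [mem_neighborFinset] at ha hb hx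
  obtain rfl | hxb := eq_or_ne x b
  · obtain ⟨y, hy, z, hz, hyz⟩ := hG.exists_adj_mem_notMem (s := {v, a, x}) (by simp)
      (card_le_three.trans_lt h4)
    simp only [mem_insert, mem_singleton, not_or] at hy hz
    obtain ⟨hzv, hza, hzx⟩ := hz
    rcases hy with rfl | rfl | rfl
    · exact ⟨z, y, a, x, hyz.symm, ha, hx, hza, hzx, hb.ne⟩
    · exact ⟨z, y, v, x, hyz.symm, ha.symm, hb, hzv, hzx, hx.ne⟩
    · exact ⟨z, y, v, a, hyz.symm, hb.symm, ha, hzv, hza, hx.ne'⟩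
  · exact ⟨x, a, v, b, hx.symm, ha.symm, hb, hxv, hxb, hab⟩

theorem containsPath_five_of_two_le_degree [DecidableRel G.Adj] (hG : G.Connected)
    (h5 : 5 ≤ Fintype.card V) (hdeg : ∀ v, 2 ≤ G.degree v) :
    ContainsPath 5 G := by
  obtain ⟨a, b, c, d, hab, hbc, hcd, hac, had, hbd⟩ := hG.exists_path_four (by omega) hdeg
  have other (v t : V) : ∃ z, G.Adj v z ∧ z ≠ t := by
    obtain ⟨z, hz, hzt⟩ := exists_mem_ne (hdeg v) t
    exact ⟨z, (mem_neighborFinset _ _ _).mp hz, hzt⟩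
  obtain ⟨x, hax, hxb⟩ := other a b
  obtain rfl | hxc := eq_or_ne x c
  · obtain ⟨y, hdy, hyx⟩ := other d x
    obtain rfl | hya := eq_or_ne y a
    · exact hG.containsPath_five_of_cycle_four h5 hab hbc hcd hdy hac hbd
    obtain rfl | hyb := eq_or_ne y b
    · exact hG.containsPath_five_of_cycle_four h5 hax hcd hdy hab.symm had hbc.ne'
    exact containsPath_five_of_adj hdy.symm hcd.symm hbc.symm hab.symm hyx hyb hya hbd.symm
      had.symm hac.symm
  obtain rfl | hxd := eq_or_ne x d
  · exact hG.containsPath_five_of_cycle_four h5 hab hbc hcd hax.symm hac hbd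
  exact containsPath_five_of_adj hax.symm hab hbc hcd hxb hxc hxd hac had hbd

theorem exists_degree_eq_one [DecidableRel G.Adj] (hG : G.Connected)
    (h5 : 5 ≤ Fintype.card V) (hP : ¬ ContainsPath 5 G) : ∃ v, G.degree v = 1 := by
  by_contra! h
  have : Nontrivial V := Fintype.one_lt_card_iff_nontrivial.mp (by omega)
  refine hP (hG.containsPath_five_of_two_le_degree h5 fun v => ?_)
  have := hG.preconnected.degree_pos_of_nontrivial v
  have := h v
  omega

theorem card_edgeFinset_le_card_add_one [DecidableRel G.Adj]
    (hG : G.Connected) (h5 : 5 ≤ Fintype.card V) (hP : ¬ ContainsPath 5 G) :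
    #G.edgeFinset ≤ Fintype.card V + 1 := by
  classical
  induction hN : Fintype.card V generalizing V with
  | zero => omega
  | succ N ih =>
    obtain ⟨v, hv⟩ := hG.exists_degree_eq_one h5 hP
    obtain ⟨u, hvu, -⟩ := degree_eq_one_iff_existsUnique_adj.mp hv
    have hcard : Fintype.card ({v}ᶜ : Set V) = N := by
      rw [Fintype.card_compl_set]
      simp [hN]
    have hP' : ¬ ContainsPath 5 (G.induce {v}ᶜ) := fun h => hP (h.map (Embedding.induce _))
    have hdel : #G.edgeFinset ≤ #(G.induce {v}ᶜ).edgeFinset + 1 := by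
      rw [card_edgeFinset_induce_compl_singleton, card_edgeFinset_deleteIncidenceSet, hv]
      omega
    obtain rfl | hN5 : N = 4 ∨ 5 ≤ N := by omega
    · have hlt : #(G.induce {v}ᶜ).edgeFinset < (Fintype.card ({v}ᶜ : Set V)).choose 2 :=
        card_edgeFinset_le_card_choose_two.lt_of_ne fun h => hP
          (containsPath_five_of_induce_compl_singleton_eq_top h5 hvu
            (eq_top_of_card_choose_two_le h.ge))
      rw [hcard] at hlt
      norm_num [Nat.choose] at hlt
      omega
    · have := ih (hG.induce_compl_singleton_of_degree_eq_one hv) (by omega) hP' hcard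
      omega

theorem card_edgeFinset_le_turanPathFive [DecidableRel G.Adj]
    (hG : G.Connected) (hP : ¬ ContainsPath 5 G) :
    #G.edgeFinset ≤ turanPathFive (Fintype.card V) := by
  rcases le_or_gt (Fintype.card V) 4 with h4 | h5
  · exact card_edgeFinset_le_card_choose_two.trans (choose_two_le_turanPathFive h4)
  · exact (hG.card_edgeFinset_le_card_add_one h5 hP).trans (add_one_le_turanPathFive h5)

end SimpleGraph.Connected

theorem card_edgeFinset_le_turanPathFive [Fintype V] [DecidableRel G.Adj]
    (hP : ¬ ContainsPath 5 G) : #G.edgeFinset ≤ turanPathFive (Fintype.card V) := by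
  classical
  induction hN : Fintype.card V using Nat.strong_induction_on generalizing V with
  | _ N ih =>
  rcases isEmpty_or_nonempty V with hV | ⟨⟨x⟩⟩
  · exact card_edgeFinset_le_card_choose_two.trans (by simp [Fintype.card_eq_zero])
  set S := (G.connectedComponentMk x).supp
  have hS (a b : V) (hab : G.Adj a b) (ha : a ∈ S) : b ∈ S :=
    ((ConnectedComponent.connectedComponentMk_eq_of_adj hab).symm.trans ha :)
  have hconn : (G.induce S).Connected := (G.connectedComponentMk x).connected_toSimpleGraph
  have hS_pos : 0 < Fintype.card S := Fintype.card_pos_iff.mpr ⟨⟨x, rfl⟩⟩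
  have hcard : Fintype.card S + Fintype.card (Sᶜ : Set V) = N := by
    rw [Fintype.card_compl_set, ← hN]
    have := set_fintype_card_le_univ S
    omega
  calc #G.edgeFinset ≤ #(G.induce S).edgeFinset + #(G.induce Sᶜ).edgeFinset :=
        card_edgeFinset_le_induce_add_induce_compl S hS
    _ ≤ turanPathFive (Fintype.card S) + turanPathFive (Fintype.card (Sᶜ : Set V)) :=
        add_le_add (hconn.card_edgeFinset_le_turanPathFive fun h => hP (h.map (Embedding.induce _)))
          (ih _ (by omega) (fun h => hP (h.map (Embedding.induce _))) rfl)
    _ ≤ turanPathFive N := hcard ▸ turanPathFive_add_le _ _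

theorem exPath_le {t n m : ℕ}
    (h : ∀ G : SimpleGraph (Fin n), ¬ ContainsPath t G → G.edgeSet.ncard ≤ m) :
    exPath t n ≤ m :=
  csSup_le' (by rintro _ ⟨G, hG, rfl⟩; exact h G hG)

theorem ncard_edgeSet_le_exPath {t n : ℕ} {G : SimpleGraph (Fin n)} (hG : ¬ ContainsPath t G) :
    G.edgeSet.ncard ≤ exPath t n := by
  classical
  refine le_csSup ⟨n.choose 2, ?_⟩ ⟨G, hG, rfl⟩
  rintro _ ⟨G', -, rfl⟩
  simpa [ncard_edgeSet] using card_edgeFinset_le_card_choose_two (G := G')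

theorem exists_lt_ncard_edgeSet_colorClass {n r m : ℕ} (C : Sym2 (Fin n) → Fin r)
    (h : r * m < n.choose 2) : ∃ c, m < (colorClass C c).edgeSet.ncard := by
  classical
  obtain ⟨c, -, hc⟩ := exists_lt_card_fiber_of_mul_lt_card_of_maps_to (f := C)
    (s := (⊤ : SimpleGraph (Fin n)).edgeFinset) (t := univ) (fun _ _ => mem_univ _)
    (by rwa [card_univ, Fintype.card_fin, card_edgeFinset_top_eq_card_choose_two,
      Fintype.card_fin])
  refine ⟨c, hc.trans_le (le_of_eq ?_)⟩
  rw [← Set.ncard_coe_finset]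
  congr 1
  ext e
  simp [colorClass, and_comm]

/-- If `r ≡ 0 (mod 4)` and `n = 3r + 1`, or `r ≡ 1 (mod 4)` and `n = 3r + 2`, or
`r ≡ 2 (mod 4)` and `n = 3r`, then every `r`-edge-colouring of `K_n` has a colour class
with more than `ex(n, P₅)` edges, and hence a monochromatic copy of `P₅`. -/
theorem colour_class_exceeds_turan (r n : ℕ) (hr : 1 ≤ r)
    (h : (r % 4 = 0 ∧ n = 3 * r + 1) ∨ (r % 4 = 1 ∧ n = 3 * r + 2) ∨
      (r % 4 = 2 ∧ n = 3 * r))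
    (C : Sym2 (Fin n) → Fin r) :
    (∃ c : Fin r, exPath 5 n < (colorClass C c).edgeSet.ncard) ∧
    HasMonoPath 5 C := by
  classical
  have hex : exPath 5 n ≤ turanPathFive n := exPath_le fun G hG => by
    simpa [ncard_edgeSet] using card_edgeFinset_le_turanPathFive hG
  obtain ⟨c, hc⟩ := exists_lt_ncard_edgeSet_colorClass C (mul_turanPathFive_lt_choose_two hr h)
  refine ⟨⟨c, hex.trans_lt hc⟩, c, ?_⟩
  by_contra hP
  exact (ncard_edgeSet_le_exPath hP).not_gt (hex.trans_lt hc)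
end

section
/- If r ≡ 0 (mod 4) and r ≠ 4, or r ≡ 3 (mod 4), and r is such that the corresponding resolvable covering design on g(r) points exists (where g(r) = 3r when r ≡ 0 (mod 4) and g(r) = 3r−1 when r ≡ 3 (mod 4)), then there exists an r-edge-colouring of the complete graph K_{g(r)} in which every monochromatic connected component has at most 4 vertices, and hence which contains no monochromatic copy of P_5; consequently R_r(P_5) ≥ g(r) + 1 for all r ≠ 4 in these residue classes. -/
/-!
Colour each edge by the parallel class of a block containing it. A colour class joins only
points of a common block of that class, and the blocks of one class are pairwise disjoint, so
every monochromatic component lies inside a block and has at most 4 vertices; in particular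
there is no monochromatic `P₅`.

The Ramsey bound also needs `R_r(P₅)` to be finite. In an `r`-colouring of `K_{6r+2}` some
colour class has average degree above 6; deleting vertices of degree at most 3 keeps it so and
ends in a nonempty subgraph of minimum degree 4, where a `P₅` is found greedily.
-/

open Finset

namespace SimpleGraph

variable {V : Type*} [DecidableEq V] (G : SimpleGraph V) [DecidableRel G.Adj]

/-- Greedy extension: the first vertex of a path on `m + 1 ≤ k` vertices has a neighbour in `T`
off the path, since at most `m` of its `≥ k` neighbours lie on it. -/
lemma exists_path_of_le_card_filter_adj {k : ℕ} {T : Finset V} (hT : T.Nonempty)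
    (hdeg : ∀ x ∈ T, k ≤ #(T.filter (G.Adj x))) :
    ∀ m ≤ k, ∃ p : Fin (m + 1) → V, Function.Injective p ∧ (∀ i, p i ∈ T) ∧
      ∀ i j : Fin (m + 1), (i : ℕ) + 1 = j → G.Adj (p i) (p j) := by
  intro m
  induction m with
  | zero =>
    obtain ⟨x, hx⟩ := hT
    exact fun _ => ⟨fun _ => x, fun i j _ => Fin.ext (by omega), fun _ => hx,
      fun i j hij => by omega⟩
  | succ m ih =>
    intro hm
    obtain ⟨p, hinj, hpT, hadj⟩ := ih (by omega)
    have hcard : #((univ.image p).erase (p 0)) < #(T.filter (G.Adj (p 0))) := by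
      rw [card_erase_of_mem (mem_image_of_mem p (mem_univ 0)), card_image_of_injective _ hinj,
        card_univ, Fintype.card_fin]
      have := hdeg _ (hpT 0)
      omega
    obtain ⟨v, hv, hvp⟩ := exists_mem_notMem_of_card_lt_card hcard
    obtain ⟨hvT, hadjv⟩ := mem_filter.mp hv
    have hvrange : v ∉ Set.range p := by
      rintro ⟨i, rfl⟩
      exact hvp (mem_erase.mpr ⟨(G.ne_of_adj hadjv).symm, mem_image_of_mem p (mem_univ i)⟩)
    refine ⟨Fin.cons v p, Fin.cons_injective_iff.mpr ⟨hvrange, hinj⟩,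
      fun i => Fin.cases hvT hpT i, fun i j hij => ?_⟩
    induction j using Fin.cases with
    | zero => simp at hij
    | succ j =>
      induction i using Fin.cases with
      | zero =>
        obtain rfl : j = 0 := Fin.ext (by simpa using hij.symm)
        simpa using hadjv.symm
      | succ i => simpa using hadj i j (by simpa using hij)

lemma containsPath_of_le_card_filter_adj {k : ℕ} {T : Finset V} (hT : T.Nonempty)
    (hdeg : ∀ x ∈ T, k ≤ #(T.filter (G.Adj x))) : ContainsPath (k + 1) G := by
  obtain ⟨p, hinj, -, hadj⟩ := G.exists_path_of_le_card_filter_adj hT hdeg k le_rfl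
  exact ⟨p, hinj, hadj⟩

lemma sum_card_filter_adj_eq_sum_erase_add {S : Finset V} {x : V} (hx : x ∈ S) :
    ∑ y ∈ S, #(S.filter (G.Adj y)) =
      ∑ y ∈ S.erase x, #((S.erase x).filter (G.Adj y)) + 2 * #(S.filter (G.Adj x)) := by
  simp only [card_filter]
  rw [← add_sum_erase S _ hx,
    ← sum_erase S (a := x) (f := fun z => if G.Adj x z then 1 else 0) (by simp)]
  have hinner : ∀ y ∈ S.erase x, (∑ z ∈ S, if G.Adj y z then 1 else 0) =
      (if G.Adj x y then 1 else 0) + ∑ z ∈ S.erase x, if G.Adj y z then 1 else 0 := by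
    intro y _
    rw [← add_sum_erase S _ hx, if_congr (G.adj_comm y x) rfl rfl]
  rw [sum_congr rfl hinner, sum_add_distrib]
  ring

/-- Deleting a vertex of degree at most `k` keeps the average degree above `2k`. -/
lemma exists_subset_lt_card_filter_adj {k : ℕ} (S : Finset V)
    (hsum : 2 * k * #S < ∑ x ∈ S, #(S.filter (G.Adj x))) :
    ∃ T ⊆ S, T.Nonempty ∧ ∀ x ∈ T, k < #(T.filter (G.Adj x)) := by
  induction S using Finset.strongInduction with
  | _ S ih =>
    by_cases hmin : ∀ x ∈ S, k < #(S.filter (G.Adj x))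
    · refine ⟨S, Subset.refl S, nonempty_iff_ne_empty.mpr ?_, hmin⟩
      rintro rfl
      simp at hsum
    · obtain ⟨x, hx, hxdeg⟩ : ∃ x ∈ S, #(S.filter (G.Adj x)) ≤ k := by simpa using hmin
      have hcard := card_erase_add_one hx
      rw [G.sum_card_filter_adj_eq_sum_erase_add hx] at hsum
      obtain ⟨T, hTS, hT, hTdeg⟩ := ih (S.erase x) (erase_ssubset hx) (by nlinarith)
      exact ⟨T, hTS.trans (erase_subset x S), hT, hTdeg⟩

lemma containsPath_of_two_mul_card_lt_sum {k : ℕ} (S : Finset V)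
    (hsum : 2 * k * #S < ∑ x ∈ S, #(S.filter (G.Adj x))) : ContainsPath (k + 2) G := by
  obtain ⟨T, -, hT, hTdeg⟩ := G.exists_subset_lt_card_filter_adj S hsum
  exact G.containsPath_of_le_card_filter_adj hT hTdeg

end SimpleGraph

section Colouring

variable {n r : ℕ}

lemma colorClass_adj {C : Sym2 (Fin n) → Fin r} {c : Fin r} {x y : Fin n} :
    (colorClass C c).Adj x y ↔ C s(x, y) = c ∧ x ≠ y := by
  simp [colorClass]

lemma sum_card_filter_colorClass_adj (C : Sym2 (Fin n) → Fin r)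
    (x : Fin n) [∀ c, DecidableRel (colorClass C c).Adj] :
    ∑ c, #(univ.filter ((colorClass C c).Adj x)) = n - 1 := by
  have hfibre := card_eq_sum_card_fiberwise (f := fun y => C s(x, y)) (s := univ.erase x)
    (t := univ) (fun _ _ => mem_coe.mpr (mem_univ _))
  rw [card_erase_of_mem (mem_univ x), card_univ, Fintype.card_fin] at hfibre
  rw [hfibre]
  refine sum_congr rfl fun c _ => congrArg card ?_
  ext y
  simp [colorClass_adj, and_comm, eq_comm (a := y)]

/-- Some colour class has average degree above `2k`, as the colour degrees at a vertex sum to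
`n - 1 > 2kr`. -/
lemma hasMonoPath_of_lt {k : ℕ} (hn : 2 * k * r + 1 < n) (C : Sym2 (Fin n) → Fin r) :
    HasMonoPath (k + 2) C := by
  classical
  have htotal : ∑ c, ∑ x, #(univ.filter ((colorClass C c).Adj x)) = n * (n - 1) := by
    rw [sum_comm, sum_congr rfl fun x _ => sum_card_filter_colorClass_adj C x]
    simp
  have hlt : ∑ _c : Fin r, 2 * k * n < ∑ c, ∑ x, #(univ.filter ((colorClass C c).Adj x)) := by
    rw [htotal, sum_const, card_univ, Fintype.card_fin, smul_eq_mul]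
    calc r * (2 * k * n) = n * (2 * k * r) := by ring
      _ < n * (n - 1) := Nat.mul_lt_mul_of_pos_left (by omega) (by omega)
  obtain ⟨c, -, hc⟩ := exists_lt_of_sum_lt hlt
  exact ⟨c, (colorClass C c).containsPath_of_two_mul_card_lt_sum univ (by simpa using hc)⟩

lemma hasMonoPath_of_comp_map {m t : ℕ} {φ : Fin n → Fin m} (hφ : Function.Injective φ)
    {C : Sym2 (Fin m) → Fin r} (h : HasMonoPath t (C ∘ Sym2.map φ)) : HasMonoPath t C := by
  obtain ⟨c, p, hinj, hadj⟩ := h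
  refine ⟨c, φ ∘ p, hφ.comp hinj, fun i j hij => ?_⟩
  obtain ⟨hc, hne⟩ := colorClass_adj.mp (hadj i j hij)
  exact colorClass_adj.mpr ⟨by simpa using hc, hφ.ne hne⟩

lemma lt_pathRamsey_of_not_hasMonoPath {k g : ℕ} {C : Sym2 (Fin g) → Fin r}
    (hC : ¬ HasMonoPath (k + 2) C) : g < pathRamsey r (k + 2) := by
  rw [pathRamsey, Nat.lt_iff_add_one_le]
  refine le_csInf ⟨2 * k * r + 2, fun C' => hasMonoPath_of_lt (k := k) (by omega) C'⟩
    fun m hm => ?_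
  by_contra! hmg
  exact hC (hasMonoPath_of_comp_map (Fin.castLE_injective (by omega : m ≤ g)) (hm _))

end Colouring

lemma SimpleGraph.not_containsPath_of_ncard_reachable_le {V : Type*} [Finite V]
    {G : SimpleGraph V} {s : ℕ} (h : ∀ x, {y | G.Reachable x y}.ncard ≤ s) :
    ¬ ContainsPath (s + 1) G := by
  rintro ⟨p, hinj, hadj⟩
  have hreach : ∀ i : Fin (s + 1), G.Reachable (p 0) (p i) := by
    rintro ⟨i, hi⟩
    induction i with
    | zero => rfl
    | succ i ih => exact (ih (by omega)).trans (hadj ⟨i, by omega⟩ ⟨i + 1, hi⟩ rfl).reachable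
  have hrange : Set.range p ⊆ {y | G.Reachable (p 0) y} := Set.range_subset_iff.mpr hreach
  have := (Set.ncard_le_ncard hrange (Set.toFinite _)).trans (h (p 0))
  rw [Set.ncard_range_of_injective hinj, Nat.card_eq_fintype_card, Fintype.card_fin] at this
  omega

section Design

variable {n r : ℕ} {B : Finset (Finset (Fin n))} {f : Finset (Fin n) → Fin r}

/-- `f` assigns each block to a parallel class; an edge gets the class of some block
containing it. -/
noncomputable def blockColouring (B : Finset (Finset (Fin n))) (f : Finset (Fin n) → Fin r)
    (e : Sym2 (Fin n)) : Fin r :=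
  f (Classical.epsilon fun b => b ∈ B ∧ ∀ v ∈ e, v ∈ b)

lemma exists_mem_of_colorClass_blockColouring_adj
    (hcover : ∀ x y : Fin n, x ≠ y → ∃ b ∈ B, x ∈ b ∧ y ∈ b) {c : Fin r} {x y : Fin n}
    (h : (colorClass (blockColouring B f) c).Adj x y) : ∃ b ∈ B, f b = c ∧ x ∈ b ∧ y ∈ b := by
  obtain ⟨hc, hne⟩ := colorClass_adj.mp h
  obtain ⟨b, hb, hxb, hyb⟩ := hcover x y hne
  obtain ⟨hB, hmem⟩ := Classical.epsilon_spec (p := fun b => b ∈ B ∧ ∀ v ∈ s(x, y), v ∈ b)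
    ⟨b, hb, by simp [hxb, hyb]⟩
  exact ⟨_, hB, hc, hmem x (Sym2.mem_mk_left x y), hmem y (Sym2.mem_mk_right x y)⟩

lemma mem_of_colorClass_blockColouring_reachable
    (hcover : ∀ x y : Fin n, x ≠ y → ∃ b ∈ B, x ∈ b ∧ y ∈ b)
    (hpart : ∀ (c : Fin r) (x : Fin n), #(B.filter fun b => f b = c ∧ x ∈ b) ≤ 1)
    {c : Fin r} {b : Finset (Fin n)} (hb : b ∈ B) (hfb : f b = c) {x y : Fin n} (hx : x ∈ b)
    (h : (colorClass (blockColouring B f) c).Reachable x y) : y ∈ b := by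
  obtain ⟨w⟩ := h
  induction w with
  | nil => exact hx
  | cons hadj _ ih =>
    obtain ⟨b', hb', hfb', hub', hvb'⟩ := exists_mem_of_colorClass_blockColouring_adj hcover hadj
    have hbb' : b' = b := card_le_one.mp (hpart c _) _ (mem_filter.mpr ⟨hb', hfb', hub'⟩) _
      (mem_filter.mpr ⟨hb, hfb, hx⟩)
    exact ih (hbb' ▸ hvb')

lemma ncard_reachable_blockColouring_le
    (hcover : ∀ x y : Fin n, x ≠ y → ∃ b ∈ B, x ∈ b ∧ y ∈ b)
    (hpart : ∀ (c : Fin r) (x : Fin n), #(B.filter fun b => f b = c ∧ x ∈ b) = 1)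
    {s : ℕ} (hs : ∀ b ∈ B, #b ≤ s) (c : Fin r) (x : Fin n) :
    {y | (colorClass (blockColouring B f) c).Reachable x y}.ncard ≤ s := by
  obtain ⟨b, hb⟩ := card_eq_one.mp (hpart c x)
  obtain ⟨hbB, hfb, hxb⟩ := mem_filter.mp (hb ▸ mem_singleton_self b)
  have hsub : {y | (colorClass (blockColouring B f) c).Reachable x y} ⊆ b := fun _ =>
    mem_of_colorClass_blockColouring_reachable hcover (fun c x => (hpart c x).le) hbB hfb hxb
  calc _ ≤ (b : Set (Fin n)).ncard := Set.ncard_le_ncard hsub b.finite_toSet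
    _ = #b := Set.ncard_coe_finset b
    _ ≤ s := hs b hbB

end Design

theorem pathRamsey_P5_lower_from_covering_general (r : ℕ)
    (g : ℕ)
    (hdesign : ∃ B : Finset (Finset (Fin g)),
      (∀ b ∈ B, b.card = 4) ∧
      (∀ x y : Fin g, x ≠ y → ∃ b ∈ B, x ∈ b ∧ y ∈ b) ∧
      ∃ f : Finset (Fin g) → Fin r,
        ∀ (i : Fin r) (x : Fin g), (B.filter (fun b => f b = i ∧ x ∈ b)).card = 1) :
    (∃ C : Sym2 (Fin g) → Fin r,
      (∀ (c : Fin r) (x : Fin g),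
        {y | (colorClass C c).Reachable x y}.ncard ≤ 4) ∧
      ¬ HasMonoPath 5 C) ∧
    g + 1 ≤ pathRamsey r 5 := by
  obtain ⟨B, hcard, hcover, f, hpart⟩ := hdesign
  have hsmall : ∀ c x, {y | (colorClass (blockColouring B f) c).Reachable x y}.ncard ≤ 4 :=
    ncard_reachable_blockColouring_le hcover hpart fun b hb => (hcard b hb).le
  have hfree : ¬ HasMonoPath 5 (blockColouring B f) := fun ⟨c, hc⟩ =>
    SimpleGraph.not_containsPath_of_ncard_reachable_le (hsmall c) hc
  exact ⟨⟨_, hsmall, hfree⟩, lt_pathRamsey_of_not_hasMonoPath (k := 3) hfree⟩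

/-- Let `g(r) = 3r` if `r ≡ 0 (mod 4)` (`r ≠ 4`) and `g(r) = 3r - 1` if `r ≡ 3 (mod 4)`.
If a resolvable `(2,4,g(r))`-covering design with `r` parallel classes exists, then there
is an `r`-edge-colouring of `K_{g(r)}` whose monochromatic components all have at most 4
vertices, hence with no monochromatic `P₅`; consequently `R_r(P₅) ≥ g(r) + 1`. -/
theorem pathRamsey_P5_lower_from_covering (r : ℕ)
    (hres : (r % 4 = 0 ∧ r ≠ 4) ∨ r % 4 = 3)
    (g : ℕ) (hg : g = if r % 4 = 0 then 3 * r else 3 * r - 1)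
    (hdesign : ∃ B : Finset (Finset (Fin g)),
      (∀ b ∈ B, b.card = 4) ∧
      (∀ x y : Fin g, x ≠ y → ∃ b ∈ B, x ∈ b ∧ y ∈ b) ∧
      ∃ f : Finset (Fin g) → Fin r,
        ∀ (i : Fin r) (x : Fin g), (B.filter (fun b => f b = i ∧ x ∈ b)).card = 1) :
    (∃ C : Sym2 (Fin g) → Fin r,
      (∀ (c : Fin r) (x : Fin g),
        {y | (colorClass C c).Reachable x y}.ncard ≤ 4) ∧
      ¬ HasMonoPath 5 C) ∧
    g + 1 ≤ pathRamsey r 5 :=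
  pathRamsey_P5_lower_from_covering_general r g hdesign
end
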